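/- Let d ≥ 1 be an integer and let β ∈ (0, d). There exists a constant c > 0, depending only on d and β, such that for every R ≥ 1 and every T with 0 < T ≤ 1, ∫_0^T ∫_{Q_R × Q_R} ∫_{ℝ^d} p_{2s}(ỹ − x₁ + x₂) ‖ỹ‖^{−β} dỹ dx₁ dx₂ ds ≥ c · T · R^{2d−β}. -/

import Mathlib

open MeasureTheory

noncomputable def heatKernel (d : ℕ) (t : ℝ) (x : EuclideanSpace ℝ (Fin d)) : ℝ :=
  (2 * Real.pi * t) ^ (-(d : ℝ) / 2) * Real.exp (-‖x‖ ^ 2 / (2 * t))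

def box (d : ℕ) (R : ℝ) : Set (EuclideanSpace ℝ (Fin d)) :=
  {x | ∀ i, |x i| ≤ R}

/-!
The inner integral is the heat-smoothed Riesz kernel `heatRiesz d β t a = ∫ p_t(y - a) ‖y‖^{-β} dy`
at `t = 2s`, `a = x₁ - x₂`. On the ball of radius `√t` about `a` the Gaussian is at least
`(2πt)^{-d/2} e^{-1/2}` and, as `a ∈ Q_R - Q_R` and `t ≤ 2`, the Riesz kernel is at least
`(2(√d + 1)R)^{-β}`; the ball has volume `t^{d/2} |B_1|`, so the powers of `t` cancel and
`heatRiesz ≳ R^{-β}` uniformly in `s`. Integrating over `Q_R × Q_R × (0, T]` gives `T R^{2d-β}`.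

The Bochner integrals are not junk thanks to an upper bound that is also uniform in `t`: from
`‖y‖^{-β} ≤ 1_{B_1}(y) ‖y‖^{-β} + 1`, Tonelli and the unit mass of the Gaussian,
`∫_S heatRiesz t (x₀ - x) dx ≤ ∫_{B_1} ‖y‖^{-β} + |S|`, which is finite because `β < d`.
-/

open Real Metric Set
open scoped ENNReal

section HeatKernel

variable {d : ℕ} {t : ℝ}

lemma heatKernel_nonneg (ht : 0 ≤ t) (x : EuclideanSpace ℝ (Fin d)) : 0 ≤ heatKernel d t x := by
  unfold heatKernel
  positivity

lemma heatKernel_le (ht : 0 ≤ t) (x : EuclideanSpace ℝ (Fin d)) :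
    heatKernel d t x ≤ (2 * π * t) ^ (-(d : ℝ) / 2) := by
  refine mul_le_of_le_one_right (by positivity) (exp_le_one_iff.mpr ?_)
  exact div_nonpos_of_nonpos_of_nonneg (neg_nonpos.mpr (by positivity)) (by positivity)

lemma le_heatKernel (ht : 0 < t) {x : EuclideanSpace ℝ (Fin d)} (hx : ‖x‖ ^ 2 ≤ t) :
    (2 * π * t) ^ (-(d : ℝ) / 2) * exp (-(1 / 2)) ≤ heatKernel d t x := by
  refine mul_le_mul_of_nonneg_left (exp_le_exp.mpr ?_) (by positivity)
  rw [neg_div, neg_le_neg_iff, div_le_iff₀ (by positivity)]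
  linarith

lemma heatKernel_eq_mul_exp (t : ℝ) (x : EuclideanSpace ℝ (Fin d)) :
    heatKernel d t x = (2 * π * t) ^ (-(d : ℝ) / 2) * exp (-(2 * t)⁻¹ * ‖x‖ ^ 2) := by
  rw [heatKernel]
  ring_nf

lemma integral_heatKernel (ht : 0 < t) : ∫ x, heatKernel d t x = 1 := by
  simp_rw [heatKernel_eq_mul_exp, integral_const_mul]
  rw [GaussianFourier.integral_rexp_neg_mul_sq_norm (by positivity), finrank_euclideanSpace_fin,
    div_inv_eq_mul, show π * (2 * t) = 2 * π * t by ring, ← rpow_add (by positivity), neg_div,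
    neg_add_cancel, rpow_zero]

lemma integrable_heatKernel (ht : 0 < t) : Integrable (heatKernel d t) :=
  .of_integral_ne_zero (by rw [integral_heatKernel ht]; exact one_ne_zero)

lemma lintegral_heatKernel (ht : 0 < t) : ∫⁻ x, ENNReal.ofReal (heatKernel d t x) = 1 := by
  rw [← ofReal_integral_eq_lintegral_ofReal (integrable_heatKernel ht)
    (.of_forall (heatKernel_nonneg ht.le)), integral_heatKernel ht, ENNReal.ofReal_one]

end HeatKernel

@[fun_prop]
lemma Measurable.heatKernel {α : Type*} [MeasurableSpace α] {d : ℕ} {t : α → ℝ}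
    {x : α → EuclideanSpace ℝ (Fin d)} (ht : Measurable t) (hx : Measurable x) :
    Measurable fun a => heatKernel d (t a) (x a) := by
  unfold _root_.heatKernel
  fun_prop

lemma rpow_neg_norm_le_indicator_add_one {E : Type*} [NormedAddCommGroup E] {β : ℝ} (hβ : 0 ≤ β)
    (y : E) : ‖y‖ ^ (-β) ≤ (ball 0 1).indicator (fun y => ‖y‖ ^ (-β)) y + 1 := by
  by_cases hy : y ∈ ball (0 : E) 1
  · rw [indicator_of_mem hy]
    linarith
  · rw [indicator_of_notMem hy, zero_add]
    exact rpow_le_one_of_one_le_of_nonpos (by simpa using hy) (neg_nonpos.mpr hβ)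

lemma integrableOn_ball_rpow_neg_norm {E : Type*} [NormedAddCommGroup E] [NormedSpace ℝ E]
    [FiniteDimensional ℝ E] [MeasurableSpace E] [BorelSpace E] (μ : Measure E)
    [μ.IsAddHaarMeasure] (hE : 1 ≤ Module.finrank ℝ E) {β : ℝ} (hβ : β < Module.finrank ℝ E) :
    IntegrableOn (fun y : E => ‖y‖ ^ (-β)) (ball 0 1) μ :=
  integrableOn_ball_of_norm_le_rpow (C := 1) hE hβ
    (.of_forall fun y => by rw [one_mul, norm_of_nonneg (by positivity)])
    (measurable_norm.pow_const _).aestronglyMeasurable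

noncomputable def heatRiesz (d : ℕ) (β t : ℝ) (a : EuclideanSpace ℝ (Fin d)) : ℝ :=
  ∫ y, heatKernel d t (y - a) * ‖y‖ ^ (-β)

section HeatRiesz

variable {d : ℕ} {β t : ℝ}

lemma integrable_indicator_ball_rpow_neg_norm (hd : 1 ≤ d) (hβd : β < d) :
    Integrable ((ball (0 : EuclideanSpace ℝ (Fin d)) 1).indicator fun y => ‖y‖ ^ (-β)) :=
  (integrableOn_ball_rpow_neg_norm volume (by simpa using hd)
    (by simpa using hβd)).integrable_indicator measurableSet_ball

lemma integrable_heatKernel_mul_rpow_neg_norm (hd : 1 ≤ d) (hβ0 : 0 ≤ β) (hβd : β < d)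
    (ht : 0 < t) (a : EuclideanSpace ℝ (Fin d)) :
    Integrable fun y => heatKernel d t (y - a) * ‖y‖ ^ (-β) := by
  refine Integrable.mono' (((integrable_indicator_ball_rpow_neg_norm hd hβd).const_mul
    ((2 * π * t) ^ (-(d : ℝ) / 2))).add ((integrable_heatKernel ht).comp_sub_right a))
    (by fun_prop) (.of_forall fun y => ?_)
  have hp := heatKernel_nonneg ht.le (y - a)
  rw [norm_of_nonneg (by positivity)]
  calc heatKernel d t (y - a) * ‖y‖ ^ (-β)
      ≤ heatKernel d t (y - a) * ((ball 0 1).indicator (fun y => ‖y‖ ^ (-β)) y + 1) :=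
        mul_le_mul_of_nonneg_left (rpow_neg_norm_le_indicator_add_one hβ0 y) hp
    _ ≤ _ := by
        rw [mul_add_one]
        exact add_le_add_left (mul_le_mul_of_nonneg_right (heatKernel_le ht.le _)
          (indicator_nonneg (fun y _ => by positivity) y)) _

lemma heatRiesz_nonneg (ht : 0 ≤ t) (a : EuclideanSpace ℝ (Fin d)) : 0 ≤ heatRiesz d β t a :=
  integral_nonneg fun y => mul_nonneg (heatKernel_nonneg ht _) (by positivity)

lemma measurable_heatRiesz : Measurable (Function.uncurry (heatRiesz d β)) :=
  (StronglyMeasurable.integral_prod_right'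
    (f := fun q : (ℝ × EuclideanSpace ℝ (Fin d)) × EuclideanSpace ℝ (Fin d) =>
      heatKernel d q.1.1 (q.2 - q.1.2) * ‖q.2‖ ^ (-β))
    (by fun_prop : Measurable _).stronglyMeasurable).measurable

lemma le_heatRiesz (hd : 1 ≤ d) (hβ0 : 0 ≤ β) (hβd : β < d) (ht : 0 < t)
    {a : EuclideanSpace ℝ (Fin d)} {ρ : ℝ} (hρ : ‖a‖ + √t ≤ ρ) :
    (2 * π) ^ (-(d : ℝ) / 2) * exp (-(1 / 2)) * volume.real (ball (0 : EuclideanSpace ℝ (Fin d)) 1)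
      * ρ ^ (-β) ≤ heatRiesz d β t a := by
  have : Nontrivial (EuclideanSpace ℝ (Fin d)) := by
    have : Nonempty (Fin d) := ⟨⟨0, hd⟩⟩
    infer_instance
  have hρ0 : 0 ≤ ρ := by linarith [norm_nonneg a, sqrt_nonneg t]
  -- the origin is removed because `‖0‖ ^ (-β) = 0` for `β ≠ 0`
  set S := ball a √t \ {0}
  have hvol : volume.real S = √t ^ d * volume.real (ball (0 : EuclideanSpace ℝ (Fin d)) 1) := by
    rw [measureReal_def, measure_sdiff_null (measure_singleton _),
      Measure.addHaar_ball _ _ (sqrt_nonneg t), ENNReal.toReal_mul,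
      ENNReal.toReal_ofReal (by positivity), finrank_euclideanSpace_fin]
    rfl
  have hscale : (2 * π * t) ^ (-(d : ℝ) / 2) * √t ^ d = (2 * π) ^ (-(d : ℝ) / 2) := by
    rw [mul_rpow (by positivity) ht.le, sqrt_eq_rpow, ← rpow_natCast, ← rpow_mul ht.le, mul_assoc,
      ← rpow_add ht, neg_div, one_div_mul_eq_div, neg_add_cancel, rpow_zero, mul_one]
  have hpt : ∀ y ∈ S, (2 * π * t) ^ (-(d : ℝ) / 2) * exp (-(1 / 2)) * ρ ^ (-β)
      ≤ heatKernel d t (y - a) * ‖y‖ ^ (-β) := by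
    rintro y ⟨hya, hy0⟩
    have hya : ‖y - a‖ < √t := by rwa [mem_ball, dist_eq_norm] at hya
    refine mul_le_mul (le_heatKernel ht ?_) (rpow_le_rpow_of_nonpos (norm_pos_iff.mpr hy0) ?_
      (neg_nonpos.mpr hβ0)) (rpow_nonneg hρ0 _) (heatKernel_nonneg ht.le _)
    · calc ‖y - a‖ ^ 2 ≤ √t ^ 2 := by gcongr
        _ = t := sq_sqrt ht.le
    · calc ‖y‖ = ‖(y - a) + a‖ := by rw [sub_add_cancel]
        _ ≤ ‖y - a‖ + ‖a‖ := norm_add_le _ _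
        _ ≤ ρ := by linarith
  have hint := integrable_heatKernel_mul_rpow_neg_norm hd hβ0 hβd ht a
  calc _ = (2 * π * t) ^ (-(d : ℝ) / 2) * exp (-(1 / 2)) * ρ ^ (-β) * volume.real S := by
        rw [hvol, ← hscale]
        ring
    _ ≤ ∫ y in S, heatKernel d t (y - a) * ‖y‖ ^ (-β) :=
        setIntegral_ge_of_const_le_real (measurableSet_ball.diff (measurableSet_singleton 0))
          ((measure_mono sdiff_subset).trans_lt measure_ball_lt_top).ne hpt hint.integrableOn
    _ ≤ heatRiesz d β t a :=
        setIntegral_le_integral hint (.of_forall fun y => mul_nonneg (heatKernel_nonneg ht.le _)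
          (by positivity))

lemma ofReal_heatRiesz_le (hd : 1 ≤ d) (hβ0 : 0 ≤ β) (hβd : β < d) (ht : 0 < t)
    (a : EuclideanSpace ℝ (Fin d)) :
    ENNReal.ofReal (heatRiesz d β t a) ≤
      (∫⁻ y, ENNReal.ofReal ((ball (0 : EuclideanSpace ℝ (Fin d)) 1).indicator
        (fun y => ‖y‖ ^ (-β)) y) * ENNReal.ofReal (heatKernel d t (y - a))) + 1 := by
  set k := (ball (0 : EuclideanSpace ℝ (Fin d)) 1).indicator (fun y => ‖y‖ ^ (-β))
  have hk : ∀ y, 0 ≤ k y := indicator_nonneg fun y _ => by positivity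
  calc ENNReal.ofReal (heatRiesz d β t a)
      = ∫⁻ y, ENNReal.ofReal (heatKernel d t (y - a) * ‖y‖ ^ (-β)) :=
        ofReal_integral_eq_lintegral_ofReal
          (integrable_heatKernel_mul_rpow_neg_norm hd hβ0 hβd ht a)
          (.of_forall fun y => mul_nonneg (heatKernel_nonneg ht.le _) (by positivity))
    _ ≤ ∫⁻ y, (ENNReal.ofReal (k y) * ENNReal.ofReal (heatKernel d t (y - a)) +
          ENNReal.ofReal (heatKernel d t (y - a))) := by
        refine lintegral_mono fun y => ?_
        have hp := heatKernel_nonneg ht.le (y - a)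
        rw [← ENNReal.ofReal_mul (hk y), ← ENNReal.ofReal_add (mul_nonneg (hk y) hp) hp]
        refine ENNReal.ofReal_le_ofReal ?_
        calc heatKernel d t (y - a) * ‖y‖ ^ (-β) ≤ heatKernel d t (y - a) * (k y + 1) :=
              mul_le_mul_of_nonneg_left (rpow_neg_norm_le_indicator_add_one hβ0 y) hp
          _ = _ := by ring
    _ = _ := by
        rw [lintegral_add_right _ (by fun_prop), lintegral_sub_right_eq_self
          (fun z => ENNReal.ofReal (heatKernel d t z)), lintegral_heatKernel ht]

lemma setLIntegral_heatRiesz_sub_le (hd : 1 ≤ d) (hβ0 : 0 ≤ β) (hβd : β < d) (ht : 0 < t)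
    (x₀ : EuclideanSpace ℝ (Fin d)) (S : Set (EuclideanSpace ℝ (Fin d))) :
    ∫⁻ x in S, ENNReal.ofReal (heatRiesz d β t (x₀ - x)) ≤
      ENNReal.ofReal (∫ y in ball (0 : EuclideanSpace ℝ (Fin d)) 1, ‖y‖ ^ (-β)) + volume S := by
  set k := (ball (0 : EuclideanSpace ℝ (Fin d)) 1).indicator (fun y => ‖y‖ ^ (-β))
  have hk : ∫⁻ y, ENNReal.ofReal (k y) =
      ENNReal.ofReal (∫ y in ball (0 : EuclideanSpace ℝ (Fin d)) 1, ‖y‖ ^ (-β)) := by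
    rw [← integral_indicator measurableSet_ball, ofReal_integral_eq_lintegral_ofReal
      (integrable_indicator_ball_rpow_neg_norm hd hβd)
      (.of_forall (indicator_nonneg fun y _ => by positivity))]
  have hkm : Measurable k := (measurable_norm.pow_const _).indicator measurableSet_ball
  have hmass : ∀ y, ∫⁻ x in S, ENNReal.ofReal (heatKernel d t (y - (x₀ - x))) ≤ 1 := fun y =>
    calc _ ≤ ∫⁻ x, ENNReal.ofReal (heatKernel d t (x + (y - x₀))) := by
          simp_rw [show ∀ x, y - (x₀ - x) = x + (y - x₀) by intro x; abel]
          exact setLIntegral_le_lintegral _ _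
      _ = 1 := by rw [lintegral_add_right_eq_self (fun z => ENNReal.ofReal (heatKernel d t z)),
          lintegral_heatKernel ht]
  calc ∫⁻ x in S, ENNReal.ofReal (heatRiesz d β t (x₀ - x))
      ≤ ∫⁻ x in S, ((∫⁻ y, ENNReal.ofReal (k y) *
          ENNReal.ofReal (heatKernel d t (y - (x₀ - x)))) + 1) :=
        lintegral_mono fun x => ofReal_heatRiesz_le hd hβ0 hβd ht _
    _ = (∫⁻ y, ENNReal.ofReal (k y) * ∫⁻ x in S, ENNReal.ofReal (heatKernel d t (y - (x₀ - x))))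
          + volume S := by
        rw [lintegral_add_right _ measurable_const, setLIntegral_one,
          lintegral_lintegral_swap ((hkm.comp measurable_snd).ennreal_ofReal.mul
            (Measurable.heatKernel measurable_const (measurable_snd.sub
              (measurable_const.sub measurable_fst))).ennreal_ofReal).aemeasurable]
        refine congrArg (· + volume S) (lintegral_congr fun y => ?_)
        exact lintegral_const_mul _ (by fun_prop)
    _ ≤ (∫⁻ y, ENNReal.ofReal (k y)) + volume S := by
        gcongr with y
        exact mul_le_of_le_one_right' (hmass y)
    _ = _ := by rw [hk]

lemma integrableOn_heatRiesz_sub (hd : 1 ≤ d) (hβ0 : 0 ≤ β) (hβd : β < d) (ht : 0 < t)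
    (x₀ : EuclideanSpace ℝ (Fin d)) {S : Set (EuclideanSpace ℝ (Fin d))} (hS : volume S ≠ ∞) :
    IntegrableOn (fun x => heatRiesz d β t (x₀ - x)) S := by
  refine ⟨(measurable_heatRiesz.comp (measurable_const.prodMk (measurable_const.sub measurable_id))
    ).aestronglyMeasurable, ?_⟩
  rw [hasFiniteIntegral_iff_ofReal (.of_forall fun x => heatRiesz_nonneg ht.le _)]
  exact (setLIntegral_heatRiesz_sub_le hd hβ0 hβd ht x₀ S).trans_lt
    (ENNReal.add_lt_top.mpr ⟨ENNReal.ofReal_lt_top, hS.lt_top⟩)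

end HeatRiesz

noncomputable def heatRieszPotential (d : ℕ) (β : ℝ) (S : Set (EuclideanSpace ℝ (Fin d))) (t : ℝ)
    (x : EuclideanSpace ℝ (Fin d)) : ℝ :=
  ∫ y in S, heatRiesz d β t (x - y)

noncomputable def heatRieszEnergy (d : ℕ) (β : ℝ) (S : Set (EuclideanSpace ℝ (Fin d))) (t : ℝ) :
    ℝ :=
  ∫ x in S, heatRieszPotential d β S t x

section Energy

variable {d : ℕ} {β t : ℝ} {S : Set (EuclideanSpace ℝ (Fin d))}

lemma heatRieszPotential_nonneg (ht : 0 ≤ t) (x : EuclideanSpace ℝ (Fin d)) :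
    0 ≤ heatRieszPotential d β S t x :=
  integral_nonneg fun _ => heatRiesz_nonneg ht _

lemma heatRieszPotential_le (hd : 1 ≤ d) (hβ0 : 0 ≤ β) (hβd : β < d) (ht : 0 < t)
    (hS : volume S ≠ ∞) (x : EuclideanSpace ℝ (Fin d)) :
    heatRieszPotential d β S t x ≤
      (∫ y in ball (0 : EuclideanSpace ℝ (Fin d)) 1, ‖y‖ ^ (-β)) + volume.real S := by
  have hK : 0 ≤ ∫ y in ball (0 : EuclideanSpace ℝ (Fin d)) 1, ‖y‖ ^ (-β) :=
    setIntegral_nonneg measurableSet_ball fun y _ => by positivity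
  rw [heatRieszPotential, integral_eq_lintegral_of_nonneg_ae
    (.of_forall fun y => heatRiesz_nonneg ht.le _)
    (integrableOn_heatRiesz_sub hd hβ0 hβd ht x hS).aestronglyMeasurable]
  refine ENNReal.toReal_le_of_le_ofReal (by positivity) ?_
  rw [ENNReal.ofReal_add hK measureReal_nonneg, ofReal_measureReal hS]
  exact setLIntegral_heatRiesz_sub_le hd hβ0 hβd ht x S

lemma measurable_heatRieszPotential :
    Measurable (Function.uncurry (heatRieszPotential d β S)) :=
  (StronglyMeasurable.integral_prod_right' (ν := volume.restrict S)
    (f := fun q : (ℝ × EuclideanSpace ℝ (Fin d)) × EuclideanSpace ℝ (Fin d) =>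
      heatRiesz d β q.1.1 (q.1.2 - q.2))
    (measurable_heatRiesz.comp (measurable_fst.fst.prodMk
      (measurable_fst.snd.sub measurable_snd))).stronglyMeasurable).measurable

lemma measurable_heatRieszEnergy : Measurable (heatRieszEnergy d β S) :=
  (StronglyMeasurable.integral_prod_right' (ν := volume.restrict S)
    (f := Function.uncurry (heatRieszPotential d β S))
    measurable_heatRieszPotential.stronglyMeasurable).measurable

lemma norm_heatRieszEnergy_le (hd : 1 ≤ d) (hβ0 : 0 ≤ β) (hβd : β < d) (ht : 0 < t)
    (hS : volume S ≠ ∞) :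
    ‖heatRieszEnergy d β S t‖ ≤
      ((∫ y in ball (0 : EuclideanSpace ℝ (Fin d)) 1, ‖y‖ ^ (-β)) + volume.real S) *
        volume.real S :=
  norm_setIntegral_le_of_norm_le_const hS.lt_top fun x _ => by
    rw [norm_of_nonneg (heatRieszPotential_nonneg ht.le x)]
    exact heatRieszPotential_le hd hβ0 hβd ht hS x

end Energy

lemma setIntegral_ge_of_const_le_of_bounded {α : Type*} [MeasurableSpace α] {μ : Measure α}
    {f : α → ℝ} {s : Set α} {c C : ℝ} (hs : MeasurableSet s) (hμs : μ s ≠ ∞) (hf : Measurable f)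
    (hc : ∀ x ∈ s, c ≤ f x) (hC : ∀ x ∈ s, ‖f x‖ ≤ C) :
    c * μ.real s ≤ ∫ x in s, f x ∂μ :=
  setIntegral_ge_of_const_le_real hs hμs hc
    (Measure.integrableOn_of_bounded hμs hf.aestronglyMeasurable (ae_restrict_of_forall_mem hs hC))

section Box

variable {d : ℕ} {R : ℝ}

lemma measurableSet_box : MeasurableSet (box d R) := by
  simp only [box, ofPred_forall]
  exact MeasurableSet.iInter fun i => measurableSet_le (by fun_prop) measurable_const

lemma volume_box : volume (box d R) = ENNReal.ofReal (2 * R) ^ d := by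
  have h : box d R = (MeasurableEquiv.toLp 2 (Fin d → ℝ)).symm ⁻¹'
      (Set.pi Set.univ fun _ : Fin d => Set.Icc (-R) R) := by
    ext x
    simp only [box, mem_ofPred_eq, mem_preimage, mem_pi, mem_univ, true_implies, mem_Icc, abs_le]
    rfl
  rw [h, (EuclideanSpace.volume_preserving_symm_measurableEquiv_toLp (Fin d)).measure_preimage
    (MeasurableSet.univ_pi fun _ => measurableSet_Icc).nullMeasurableSet, volume_pi_pi]
  simp only [Real.volume_Icc, Finset.prod_const, Finset.card_univ, Fintype.card_fin]
  ring_nf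

lemma volume_box_ne_top : volume (box d R) ≠ ∞ := by
  rw [volume_box]
  exact ENNReal.pow_ne_top ENNReal.ofReal_ne_top

lemma norm_le_of_mem_box (hR : 0 ≤ R) {x : EuclideanSpace ℝ (Fin d)} (hx : x ∈ box d R) :
    ‖x‖ ≤ √d * R := by
  rw [EuclideanSpace.norm_eq, ← sqrt_sq hR, ← sqrt_mul (Nat.cast_nonneg d)]
  refine sqrt_le_sqrt ?_
  calc ∑ i, ‖x i‖ ^ 2 ≤ ∑ _i : Fin d, R ^ 2 :=
        Finset.sum_le_sum fun i _ => by
          rw [norm_eq_abs]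
          exact pow_le_pow_left₀ (abs_nonneg _) (hx i) 2
    _ = d * R ^ 2 := by simp

lemma le_heatRieszEnergy_box (hd : 1 ≤ d) {β t : ℝ} (hβ0 : 0 ≤ β) (hβd : β < d) (ht0 : 0 < t)
    (ht : t ≤ 4) (hR : 1 ≤ R) :
    (2 * π) ^ (-(d : ℝ) / 2) * exp (-(1 / 2)) * volume.real (ball (0 : EuclideanSpace ℝ (Fin d)) 1)
      * (2 * (√d + 1) * R) ^ (-β) * (2 * R) ^ d * (2 * R) ^ d ≤
        heatRieszEnergy d β (box d R) t := by
  have hR0 : 0 ≤ R := by linarith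
  have hQ : volume (box d R) ≠ ∞ := volume_box_ne_top
  have hvol : volume.real (box d R) = (2 * R) ^ d := by
    rw [measureReal_def, volume_box, ENNReal.toReal_pow, ENNReal.toReal_ofReal (by positivity)]
  have hG : ∀ x₁ ∈ box d R, ∀ x₂ ∈ box d R,
      (2 * π) ^ (-(d : ℝ) / 2) * exp (-(1 / 2)) *
        volume.real (ball (0 : EuclideanSpace ℝ (Fin d)) 1) * (2 * (√d + 1) * R) ^ (-β) ≤
          heatRiesz d β t (x₁ - x₂) := by
    intro x₁ h₁ x₂ h₂
    refine le_heatRiesz hd hβ0 hβd ht0 ?_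
    have hx : ‖x₁ - x₂‖ ≤ √d * R + √d * R := (norm_sub_le _ _).trans
      (add_le_add (norm_le_of_mem_box hR0 h₁) (norm_le_of_mem_box hR0 h₂))
    have hst : √t ≤ 2 := sqrt_le_iff.mpr ⟨by norm_num, by linarith⟩
    nlinarith
  rw [← hvol]
  refine setIntegral_ge_of_const_le_of_bounded
    (C := (∫ y in ball (0 : EuclideanSpace ℝ (Fin d)) 1, ‖y‖ ^ (-β)) + volume.real (box d R))
    measurableSet_box hQ
    (measurable_heatRieszPotential.comp measurable_prodMk_left) (fun x₁ h₁ => ?_) (fun x₁ _ => ?_)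
  · exact setIntegral_ge_of_const_le_real measurableSet_box hQ (hG x₁ h₁)
      (integrableOn_heatRiesz_sub hd hβ0 hβd ht0 x₁ hQ)
  · rw [norm_of_nonneg (heatRieszPotential_nonneg ht0.le _)]
    exact heatRieszPotential_le hd hβ0 hβd ht0 hQ x₁

end Box

theorem stmt_10 (d : ℕ) (hd : 1 ≤ d) (β : ℝ) (hβ0 : 0 < β) (hβd : β < d) :
    ∃ c : ℝ, 0 < c ∧ ∀ R : ℝ, 1 ≤ R → ∀ T : ℝ, 0 < T → T ≤ 1 →
      c * T * R ^ (2 * (d : ℝ) - β) ≤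
        ∫ s in Set.Ioc (0 : ℝ) T,
          ∫ x₁ in box d R, ∫ x₂ in box d R,
            ∫ ytil : EuclideanSpace ℝ (Fin d),
              heatKernel d (2 * s) (ytil - x₁ + x₂) * ‖ytil‖ ^ (-β) := by
  set c₀ := (2 * π) ^ (-(d : ℝ) / 2) * exp (-(1 / 2)) *
    volume.real (ball (0 : EuclideanSpace ℝ (Fin d)) 1)
  have hc₀ : 0 < c₀ := by
    have : 0 < volume.real (ball (0 : EuclideanSpace ℝ (Fin d)) 1) :=
      ENNReal.toReal_pos (measure_ball_pos volume 0 one_pos).ne' measure_ball_lt_top.ne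
    positivity
  refine ⟨c₀ * (2 * (√d + 1)) ^ (-β) * 4 ^ d, by positivity, fun R hR T hT0 hT1 => ?_⟩
  have key : c₀ * (2 * (√d + 1) * R) ^ (-β) * (2 * R) ^ d * (2 * R) ^ d * volume.real (Ioc 0 T) ≤
      ∫ s in Ioc 0 T, heatRieszEnergy d β (box d R) (2 * s) :=
    setIntegral_ge_of_const_le_of_bounded measurableSet_Ioc measure_Ioc_lt_top.ne
      (measurable_heatRieszEnergy.comp (measurable_const_mul 2))
      (fun s hs => le_heatRieszEnergy_box hd hβ0.le hβd (by linarith [hs.1])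
        (by linarith [hs.2]) hR)
      (fun s hs => norm_heatRieszEnergy_le hd hβ0.le hβd (by linarith [hs.1]) volume_box_ne_top)
  rw [volume_real_Ioc_of_le hT0.le, sub_zero] at key
  calc c₀ * (2 * (√d + 1)) ^ (-β) * 4 ^ d * T * R ^ (2 * (d : ℝ) - β)
      = c₀ * (2 * (√d + 1) * R) ^ (-β) * ((2 * R) ^ d * (2 * R) ^ d) * T := by
        have h4 : (2 * R) ^ d * (2 * R) ^ d = 4 ^ d * R ^ (2 * d) := by
          rw [← mul_pow, pow_mul, ← mul_pow]
          ring
        rw [mul_rpow (x := 2 * (√d + 1)) (by positivity) (by linarith), h4,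
          sub_eq_add_neg, rpow_add (by linarith), show 2 * (d : ℝ) = (2 * d : ℕ) by push_cast; ring,
          rpow_natCast]
        ring
    _ ≤ _ := le_of_eq_of_le (by ring) key
    _ = _ := by simp only [heatRieszEnergy, heatRieszPotential, heatRiesz, sub_add]
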